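/- Let ε be a Fitch map, (T,λ) any edge-labeled tree explaining ε, and T_ε = (T̂, λ̂) the ε-tree. Then T_ε is a coarse-graining of (T,λ): C(T̂) ⊆ C(T), and for every non-root vertex v̂ of T̂ and every non-root vertex v of T with C_{T̂}(v̂) = C_T(v), the edge label λ̂(par(v̂), v̂) is a subset of λ(par(v), v). -/
import Mathlib


/-- A finite rooted phylogenetic tree on leaf set `X`, with vertex type `V`.
Vertices are encoded via a parent function; `par root = root`. -/
structure PhyloTree (V X : Type) : Type where
  fin : Finite V
  root : V
  par : V → V
  par_root : par root = root
  reach : ∀ v : V, ∃ n : ℕ, par^[n] v = root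
  leaf : X → V
  leaf_inj : Function.Injective leaf
  leaf_isLeaf : ∀ (x : X) (u : V), par u = leaf x → u = leaf x
  leaf_only : ∀ v : V, (∀ u : V, par u = v → u = v) → ∃ x : X, leaf x = v
  root_deg : (∃ x : X, leaf x = root) ∨ 2 ≤ {u : V | par u = root ∧ u ≠ root}.ncard
  inner_deg : ∀ v : V, v ≠ root → (¬ ∃ x : X, leaf x = v) →
      2 ≤ {u : V | par u = v ∧ u ≠ v}.ncard

namespace PhyloTree

variable {V X : Type}

/-- `T.anc u v` : `u` is an ancestor of `v`, i.e. `u ⪯_T v`. -/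
def anc (T : PhyloTree V X) (u v : V) : Prop := ∃ n : ℕ, T.par^[n] v = u

/-- `l` is the last common ancestor of `a` and `b`. -/
def IsLca (T : PhyloTree V X) (l a b : V) : Prop :=
  T.anc l a ∧ T.anc l b ∧ ∀ u : V, T.anc u a → T.anc u b → T.anc u l

/-- The cluster of `v`: the set of leaves below `v`. -/
def cluster (T : PhyloTree V X) (v : V) : Set X := {x : X | T.anc v (T.leaf x)}

/-- The cluster set `C(T)`. -/
def clusterSet (T : PhyloTree V X) : Set (Set X) := {S : Set X | ∃ v : V, S = T.cluster v}

/-- The edge `(par u, u)` lies on the descending path from `a` down to `b`. -/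
def edgeOnDown (T : PhyloTree V X) (a b u : V) : Prop :=
  T.anc a u ∧ u ≠ a ∧ T.anc u b

/-- The edge `(par u, u)` lies on the unique path between `v` and `w`. -/
def edgeOnPath (T : PhyloTree V X) (v w u : V) : Prop :=
  ∃ l : V, T.IsLca l v w ∧ (T.edgeOnDown l v u ∨ T.edgeOnDown l w u)

/-- `T` displays the rooted triple `ab|c`. -/
def Displays (T : PhyloTree V X) (a b c : X) : Prop :=
  ∃ l3 l2 : V, T.IsLca l2 (T.leaf a) (T.leaf b) ∧
    T.IsLca l3 l2 (T.leaf c) ∧ l3 ≠ l2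

end PhyloTree

/-- `(T, lab)` explains `ε` : for distinct leaves `x,y`, `m ∈ ε x y` iff there is an
`m`-edge on the path from `lca(x,y)` down to `y`. -/
def Explains {V X M : Type} (T : PhyloTree V X) (lab : V → Set M)
    (ε : X → X → Set M) : Prop :=
  ∀ x y : X, x ≠ y → ∀ m : M,
    (m ∈ ε x y ↔ ∃ l : V, T.IsLca l (T.leaf x) (T.leaf y) ∧
      ∃ u : V, T.edgeOnDown l (T.leaf y) u ∧ m ∈ lab u)

/-- `ε` is a Fitch map: it is explained by some edge-labeled phylogenetic tree. -/
def IsFitchMap {X M : Type} (ε : X → X → Set M) : Prop :=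
  ∃ (V : Type) (T : PhyloTree V X) (lab : V → Set M), Explains T lab ε

/-- The complementary neighborhood `N_{¬m}[y]`. -/
def Nbr {X M : Type} (ε : X → X → Set M) (m : M) (y : X) : Set X :=
  {x : X | x ≠ y ∧ m ∉ ε x y} ∪ {y}

/-- The collection `N[ε]` of all complementary neighborhoods. -/
def NbrSet {X M : Type} (ε : X → X → Set M) : Set (Set X) :=
  {N : Set X | ∃ (m : M) (y : X), N = Nbr ε m y}

/-- A set system is hierarchy-like if any two members intersect in `∅` or one of them. -/
def HLike {X : Type} (H : Set (Set X)) : Prop :=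
  ∀ P ∈ H, ∀ Q ∈ H, P ∩ Q = P ∨ P ∩ Q = Q ∨ P ∩ Q = ∅

/-- The inequality condition (IC). -/
def IneqCond {X M : Type} (ε : X → X → Set M) : Prop :=
  ∀ (m : M) (y y' : X), y' ∈ Nbr ε m y → (Nbr ε m y').ncard ≤ (Nbr ε m y).ncard


/-- `(T, lab)` is (a representative of) the ε-tree `T_ε`. -/
def IsEpsTree {V X M : Type} (T : PhyloTree V X) (lab : V → Set M)
    (ε : X → X → Set M) : Prop :=
  T.clusterSet = NbrSet ε ∪ {Set.univ} ∪ {S : Set X | ∃ x : X, S = {x}} ∧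
  ∀ v : V, v ≠ T.root → lab v = {m : M | ∃ y : X, T.cluster v = Nbr ε m y}

/-- `(T', lab')` is a coarse-graining of `(T, lab)`. -/
def CoarseGraining {V' V X M : Type} (T' : PhyloTree V' X) (lab' : V' → Set M)
    (T : PhyloTree V X) (lab : V → Set M) : Prop :=
  T'.clusterSet ⊆ T.clusterSet ∧
  ∀ v' : V', v' ≠ T'.root → ∀ v : V, v ≠ T.root →
    T'.cluster v' = T.cluster v → lab' v' ⊆ lab v


/-! ### Auxiliary lemmas -/

lemma mem_nbr {X M : Type} {ε : X → X → Set M} {m : M} {y x : X} :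
    x ∈ Nbr ε m y ↔ x = y ∨ m ∉ ε x y := by
  by_cases hxy : x = y <;> simp [Nbr, hxy]

namespace PhyloTree

variable {V X : Type} (T : PhyloTree V X)

lemma anc_refl (v : V) : T.anc v v := ⟨0, rfl⟩

lemma anc_trans {u v w : V} (h1 : T.anc u v) (h2 : T.anc v w) : T.anc u w := by
  obtain ⟨n, hn⟩ := h1; obtain ⟨k, hk⟩ := h2
  exact ⟨n + k, by rw [Function.iterate_add_apply, hk, hn]⟩

lemma iterate_root (n : ℕ) : T.par^[n] T.root = T.root :=
  Function.iterate_fixed T.par_root n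

lemma root_anc (v : V) : T.anc T.root v := T.reach v

lemma anc_root_eq {v : V} (h : T.anc v T.root) : v = T.root := by
  obtain ⟨n, hn⟩ := h; rw [T.iterate_root] at hn; exact hn.symm

lemma iterate_root_of_le {v : V} {N n : ℕ} (h : T.par^[N] v = T.root) (hn : N ≤ n) :
    T.par^[n] v = T.root := by
  obtain ⟨k, rfl⟩ := Nat.exists_eq_add_of_le hn
  rw [Nat.add_comm, Function.iterate_add_apply, h, T.iterate_root]

lemma eq_root_of_cycle {v : V} {n : ℕ} (h : T.par^[n] v = v) (hn : n ≠ 0) : v = T.root := by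
  obtain ⟨N, hN⟩ := T.reach v
  have key : ∀ t : ℕ, T.par^[t * n] v = v := by
    intro t
    induction t with
    | zero => simp
    | succ t ih => rw [Nat.succ_mul, Function.iterate_add_apply, h, ih]
  have hle : N ≤ N * n := Nat.le_mul_of_pos_right N (Nat.pos_of_ne_zero hn)
  calc v = T.par^[N * n] v := (key N).symm
    _ = T.root := T.iterate_root_of_le hN hle

lemma anc_antisymm {u v : V} (h1 : T.anc u v) (h2 : T.anc v u) : u = v := by
  obtain ⟨n, hn⟩ := h1; obtain ⟨k, hk⟩ := h2
  by_cases h0 : n + k = 0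
  · have hn0 : n = 0 := by omega
    subst hn0
    simpa using hn.symm
  · have hcyc : T.par^[n + k] u = u := by
      rw [Function.iterate_add_apply, hk, hn]
    have hu : u = T.root := T.eq_root_of_cycle hcyc h0
    have hv : v = T.root := by rw [← hk, hu, T.iterate_root]
    rw [hu, hv]

lemma anc_total {u w z : V} (hu : T.anc u z) (hw : T.anc w z) : T.anc u w ∨ T.anc w u := by
  obtain ⟨n, hn⟩ := hu; obtain ⟨k, hk⟩ := hw
  rcases Nat.le_total n k with h | h
  · right
    exact ⟨k - n, by rw [← hn, ← Function.iterate_add_apply, Nat.sub_add_cancel h]; exact hk⟩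
  · left
    exact ⟨n - k, by rw [← hk, ← Function.iterate_add_apply, Nat.sub_add_cancel h]; exact hn⟩

lemma anc_leaf_eq {x : X} {w : V} (h : T.anc (T.leaf x) w) : w = T.leaf x := by
  have key : ∀ n (w : V), T.par^[n] w = T.leaf x → w = T.leaf x := by
    intro n
    induction n with
    | zero => intro w h; simpa using h
    | succ n ih =>
      intro w h
      rw [Function.iterate_succ_apply'] at h
      exact ih w (T.leaf_isLeaf x _ h)
  obtain ⟨n, hn⟩ := h
  exact key n w hn

lemma exists_child_anc {u z : V} (h : T.anc u z) (hne : u ≠ z) :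
    ∃ c, T.par c = u ∧ c ≠ u ∧ T.anc c z := by
  classical
  have hex : ∃ n, T.par^[n] z = u := h
  have hn : T.par^[Nat.find hex] z = u := Nat.find_spec hex
  have hpos : Nat.find hex ≠ 0 := by
    intro h0
    apply hne
    rw [h0] at hn
    simpa using hn.symm
  refine ⟨T.par^[Nat.find hex - 1] z, ?_, ?_, ⟨Nat.find hex - 1, rfl⟩⟩
  · rw [show Nat.find hex = Nat.find hex - 1 + 1 by omega, Function.iterate_succ_apply'] at hn
    exact hn
  · exact Nat.find_min hex (by omega)

lemma sibling_disjoint {p c c' z : V} (hc : T.par c = p) (hc' : T.par c' = p)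
    (hcp : c ≠ p) (hc'p : c' ≠ p) (hne : c ≠ c')
    (h1 : T.anc c z) (h2 : T.anc c' z) : False := by
  have key : ∀ a b : V, T.par a = p → T.par b = p → a ≠ p → T.anc a b → a = b := by
    intro a b ha hb hap hab
    obtain ⟨n, hn⟩ := hab
    cases n with
    | zero => simpa using hn.symm
    | succ n =>
      rw [Function.iterate_succ_apply, hb] at hn
      have h1' : T.anc a p := ⟨n, hn⟩
      have h2' : T.anc p a := ⟨1, by simpa using ha⟩
      exact absurd (T.anc_antisymm h1' h2') hap
  rcases T.anc_total h1 h2 with h | h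
  · exact hne (key c c' hc hc' hcp h)
  · exact hne (key c' c hc' hc hc'p h).symm

lemma exists_leaf_below (v : V) : ∃ x, T.anc v (T.leaf x) := by
  have _inst : Finite V := T.fin
  suffices H : ∀ n (v : V), {u | T.anc v u}.ncard ≤ n → ∃ x, T.anc v (T.leaf x) from
    H _ v le_rfl
  intro n
  induction n with
  | zero =>
    intro v hv
    exfalso
    have h1 : 0 < {u | T.anc v u}.ncard :=
      Set.ncard_pos (Set.toFinite _) |>.mpr ⟨v, T.anc_refl v⟩
    omega
  | succ n ih =>
    intro v hv
    by_cases hleaf : ∃ x, T.leaf x = v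
    · obtain ⟨x, rfl⟩ := hleaf; exact ⟨x, T.anc_refl _⟩
    · have hne : ¬ ∀ u, T.par u = v → u = v := fun h => hleaf (T.leaf_only v h)
      push_neg at hne
      obtain ⟨c, hc, hcv⟩ := hne
      have hvc : T.anc v c := ⟨1, by simpa using hc⟩
      have hsub1 : {u | T.anc c u} ⊆ {u | T.anc v u} := fun u hu => T.anc_trans hvc hu
      have hss : {u | T.anc c u} ⊂ {u | T.anc v u} := by
        rw [Set.ssubset_iff_of_subset hsub1]
        exact ⟨v, T.anc_refl v, fun h => hcv (T.anc_antisymm h hvc)⟩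
      have hlt := Set.ncard_lt_ncard hss (Set.toFinite _)
      obtain ⟨x, hx⟩ := ih c (by omega)
      exact ⟨x, T.anc_trans hvc hx⟩

lemma exists_other_child {p c : V} (hp : p ≠ T.root) (hc : T.par c = p) (hcp : c ≠ p) :
    ∃ c', T.par c' = p ∧ c' ≠ p ∧ c' ≠ c := by
  have hnl : ¬ ∃ x, T.leaf x = p := by
    rintro ⟨x, hx⟩
    exact hcp ((T.leaf_isLeaf x c (hx ▸ hc)).trans hx)
  have h2 := T.inner_deg p hp hnl
  obtain ⟨c', hc'mem, hne⟩ := Set.exists_ne_of_one_lt_ncard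
    (s := {u : V | T.par u = p ∧ u ≠ p}) (by omega) c
  exact ⟨c', hc'mem.1, hc'mem.2, hne⟩

lemma exists_leaf_not_below {v : V} (hv : v ≠ T.root) : ∃ x, ¬ T.anc v (T.leaf x) := by
  rcases T.root_deg with ⟨x, hx⟩ | hdeg
  · refine ⟨x, fun h => hv ?_⟩
    rw [hx] at h
    exact T.anc_root_eq h
  · obtain ⟨c, hc, hcr, hcv⟩ := T.exists_child_anc (T.root_anc v) (Ne.symm hv)
    have hcmem : c ∈ {u : V | T.par u = T.root ∧ u ≠ T.root} := ⟨hc, hcr⟩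
    obtain ⟨c', hc'mem, hne⟩ := Set.exists_ne_of_one_lt_ncard (s := {u : V | T.par u = T.root ∧ u ≠ T.root}) (by omega) c
    obtain ⟨x, hx⟩ := T.exists_leaf_below c'
    exact ⟨x, fun h =>
      T.sibling_disjoint hc'mem.1 hc hc'mem.2 hcr hne hx (T.anc_trans hcv h)⟩

lemma cluster_root : T.cluster T.root = Set.univ :=
  Set.eq_univ_of_forall fun _ => T.root_anc _

lemma cluster_leaf (x : X) : T.cluster (T.leaf x) = {x} := by
  ext z
  simp only [cluster, Set.mem_setOf_eq, Set.mem_singleton_iff]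
  constructor
  · intro h; exact T.leaf_inj (T.anc_leaf_eq h)
  · rintro rfl; exact T.anc_refl _

lemma exists_lca (a b : V) : ∃ l, T.IsLca l a b := by
  classical
  have hex : ∃ n, T.anc (T.par^[n] b) a := by
    obtain ⟨N, hN⟩ := T.reach b
    exact ⟨N, hN ▸ T.root_anc a⟩
  refine ⟨T.par^[Nat.find hex] b, Nat.find_spec hex, ⟨Nat.find hex, rfl⟩, ?_⟩
  intro u hua hub
  obtain ⟨k, hk⟩ := hub
  rcases Nat.lt_or_ge k (Nat.find hex) with h | h
  · exact absurd (by rw [hk]; exact hua) (Nat.find_min hex h)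
  · exact ⟨k - Nat.find hex, by
      rw [← Function.iterate_add_apply, Nat.sub_add_cancel h]; exact hk⟩

lemma nbr_is_cluster {M : Type} {lab : V → Set M} {ε : X → X → Set M}
    (hexp : Explains T lab ε) (m : M) (y : X) :
    ∃ v : V, T.cluster v = Nbr ε m y := by
  classical
  by_cases hall : ∀ n : ℕ, ∀ u, T.anc (T.par^[n] (T.leaf y)) u →
      u ≠ T.par^[n] (T.leaf y) → T.anc u (T.leaf y) → m ∉ lab u
  · refine ⟨T.root, ?_⟩
    rw [T.cluster_root]
    symm
    apply Set.eq_univ_of_forall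
    intro x
    rw [mem_nbr]
    by_cases hxy : x = y
    · exact Or.inl hxy
    · refine Or.inr fun hm => ?_
      obtain ⟨l, hlca, u, ⟨hlu, hul, huy⟩, hmu⟩ := (hexp x y hxy m).mp hm
      obtain ⟨N, hN⟩ := T.reach (T.leaf y)
      have hur : u ≠ T.root := fun h => hul (h.trans (T.anc_root_eq (h ▸ hlu)).symm)
      exact hall N u (by rw [hN]; exact T.root_anc u) (by rw [hN]; exact hur) huy hmu
  · push_neg at hall
    have hk0 : Nat.find hall ≠ 0 := by
      intro h0
      obtain ⟨u, hu1, hu2, hu3, hu4⟩ := Nat.find_spec hall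
      rw [h0] at hu1 hu2
      simp only [Function.iterate_zero_apply] at hu1 hu2
      exact hu2 (T.anc_leaf_eq hu1)
    obtain ⟨u₀, hu1, hu2, hu3, hu4⟩ := Nat.find_spec hall
    have hvfree : ∀ u, T.anc (T.par^[Nat.find hall - 1] (T.leaf y)) u →
        u ≠ T.par^[Nat.find hall - 1] (T.leaf y) → T.anc u (T.leaf y) → m ∉ lab u := by
      intro u h1 h2 h3 hm
      exact Nat.find_min hall (show Nat.find hall - 1 < Nat.find hall by omega)
        ⟨u, h1, h2, h3, hm⟩
    have hpv : T.par^[Nat.find hall] (T.leaf y) = T.par (T.par^[Nat.find hall - 1] (T.leaf y)) := by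
      conv_lhs => rw [show Nat.find hall = (Nat.find hall - 1) + 1 by omega]
      exact Function.iterate_succ_apply' _ _ _
    refine ⟨T.par^[Nat.find hall - 1] (T.leaf y), ?_⟩
    have hvy : T.anc (T.par^[Nat.find hall - 1] (T.leaf y)) (T.leaf y) := ⟨_, rfl⟩
    ext x
    rw [mem_nbr]
    simp only [cluster, Set.mem_setOf_eq]
    constructor
    · intro hx
      by_cases hxy : x = y
      · exact Or.inl hxy
      · refine Or.inr fun hm => ?_
        obtain ⟨l, hlca, u, ⟨hlu, hune, huy⟩, hmu⟩ := (hexp x y hxy m).mp hm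
        have hvl := hlca.2.2 _ hx hvy
        have hvu := T.anc_trans hvl hlu
        have hne : u ≠ T.par^[Nat.find hall - 1] (T.leaf y) :=
          fun heq => hune (heq.trans (T.anc_antisymm hvl (heq ▸ hlu)))
        exact hvfree u hvu hne huy hmu
    · intro h
      by_cases hxy : x = y
      · subst hxy; exact hvy
      · have hm : m ∉ ε x y := h.resolve_left hxy
        obtain ⟨l, hlca⟩ := T.exists_lca (T.leaf x) (T.leaf y)
        rcases T.anc_total hvy hlca.2.1 with hvl | hlv
        · exact T.anc_trans hvl hlca.1
        · by_cases hlveq : l = T.par^[Nat.find hall - 1] (T.leaf y)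
          · rw [← hlveq]; exact hlca.1
          · exfalso
            apply hm
            have hlp : T.anc l (T.par^[Nat.find hall] (T.leaf y)) := by
              obtain ⟨t, ht⟩ := hlv
              have ht0 : t ≠ 0 := by
                intro h0; rw [h0] at ht; exact hlveq (by simpa using ht.symm)
              rw [show t = t - 1 + 1 by omega, Function.iterate_succ_apply] at ht
              refine ⟨t - 1, ?_⟩
              rw [hpv]
              exact ht
            have hlu : T.anc l u₀ := T.anc_trans hlp hu1
            have hne : u₀ ≠ l := fun heq =>
              hu2 (heq.trans (T.anc_antisymm hlp (heq ▸ hu1)))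
            exact (hexp x y hxy m).mpr ⟨l, hlca, u₀, ⟨hlu, hne, hu3⟩, hu4⟩

lemma no_medge_below {M : Type} {lab : V → Set M} {ε : X → X → Set M}
    (hexp : Explains T lab ε) {v : V} {m : M} {y : X}
    (hv : v ≠ T.root) (hcl : T.cluster v = Nbr ε m y)
    {u : V} (hvu : T.anc v u) (hune : u ≠ v) (huy : T.anc u (T.leaf y)) :
    m ∉ lab u := by
  intro hm
  have hup : u ≠ T.par u := by
    intro h
    have hr : u = T.root := T.eq_root_of_cycle (n := 1) (by simpa using h.symm) one_ne_zero
    exact hv (T.anc_root_eq (hr ▸ hvu))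
  have hvp : T.anc v (T.par u) := by
    obtain ⟨n, hn⟩ := hvu
    have hn0 : n ≠ 0 := by
      intro h0; rw [h0] at hn; exact hune (by simpa using hn)
    rw [show n = n - 1 + 1 by omega, Function.iterate_succ_apply] at hn
    exact ⟨n - 1, hn⟩
  have hproot : T.par u ≠ T.root := fun h => hv (T.anc_root_eq (h ▸ hvp))
  obtain ⟨c', hc'1, hc'2, hc'3⟩ := T.exists_other_child hproot rfl hup
  obtain ⟨x, hx⟩ := T.exists_leaf_below c'
  have hxv : T.anc v (T.leaf x) :=
    T.anc_trans (T.anc_trans hvp ⟨1, by simpa using hc'1⟩) hx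
  have hxy : x ≠ y := by
    rintro rfl
    exact T.sibling_disjoint hc'1 rfl hc'2 hup hc'3 hx huy
  have hnot : m ∉ ε x y := by
    have hmem : x ∈ T.cluster v := hxv
    rw [hcl] at hmem
    rcases mem_nbr.mp hmem with h | h
    · exact absurd h hxy
    · exact h
  apply hnot
  obtain ⟨l, hlca⟩ := T.exists_lca (T.leaf x) (T.leaf y)
  have hlu : T.anc l u ∧ u ≠ l := by
    rcases T.anc_total hlca.2.1 huy with h | h
    · refine ⟨h, fun heq => ?_⟩
      exact T.sibling_disjoint rfl hc'1 hup hc'2 (Ne.symm hc'3)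
        (heq ▸ hlca.1) hx
    · exact (T.sibling_disjoint rfl hc'1 hup hc'2 (Ne.symm hc'3)
        (T.anc_trans h hlca.1) hx).elim
  exact (hexp x y hxy m).mpr ⟨l, hlca, u, ⟨hlu.1, hlu.2, huy⟩, hm⟩

lemma descent_step {M : Type} {lab : V → Set M} {ε : X → X → Set M}
    (hexp : Explains T lab ε) {v : V} {m : M} {y : X}
    (hcl : T.cluster v = Nbr ε m y) {u : V}
    (huv : T.anc u v) (hune : u ≠ v) (hur : u ≠ T.root) :
    ∃ w, T.anc u w ∧ w ≠ u ∧ T.anc w (T.leaf y) ∧ m ∈ lab w := by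
  have hvy : T.anc v (T.leaf y) := by
    have h : y ∈ Nbr ε m y := mem_nbr.mpr (Or.inl rfl)
    rw [← hcl] at h; exact h
  obtain ⟨c, hc, hcu, hcv⟩ := T.exists_child_anc huv hune
  obtain ⟨c', hc'1, hc'2, hc'3⟩ := T.exists_other_child hur hc hcu
  obtain ⟨x, hx⟩ := T.exists_leaf_below c'
  have hcy : T.anc c (T.leaf y) := T.anc_trans hcv hvy
  have hxy : x ≠ y := by
    rintro rfl; exact T.sibling_disjoint hc'1 hc hc'2 hcu hc'3 hx hcy
  have hxout : ¬ T.anc v (T.leaf x) := fun h =>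
    T.sibling_disjoint hc'1 hc hc'2 hcu hc'3 hx (T.anc_trans hcv h)
  have hmx : m ∈ ε x y := by
    by_contra hmn
    have h : x ∈ Nbr ε m y := mem_nbr.mpr (Or.inr hmn)
    rw [← hcl] at h
    exact hxout h
  obtain ⟨l, hlca, w, ⟨hlw, hwl, hwy⟩, hmw⟩ := (hexp x y hxy m).mp hmx
  have hul : T.anc u l :=
    hlca.2.2 u (T.anc_trans ⟨1, by simpa using hc'1⟩ hx)
      (T.anc_trans ⟨1, by simpa using hc⟩ hcy)
  refine ⟨w, T.anc_trans hul hlw, ?_, hwy, hmw⟩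
  intro hwu
  apply hwl
  have huleq : u = l := T.anc_antisymm hul (hwu ▸ hlw)
  rw [hwu, huleq]

lemma mem_lab_of_cluster_eq_nbr {M : Type} {lab : V → Set M} {ε : X → X → Set M}
    (hexp : Explains T lab ε) {v : V} {m : M} {y : X}
    (hv : v ≠ T.root) (hcl : T.cluster v = Nbr ε m y) : m ∈ lab v := by
  classical
  have hvy : T.anc v (T.leaf y) := by
    have h : y ∈ Nbr ε m y := mem_nbr.mpr (Or.inl rfl)
    rw [← hcl] at h; exact h
  have hS : ∃ n : ℕ, T.anc (T.par^[n] (T.leaf y)) v ∧ T.par^[n] (T.leaf y) ≠ T.root ∧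
      m ∈ lab (T.par^[n] (T.leaf y)) := by
    obtain ⟨x, hxout⟩ := T.exists_leaf_not_below hv
    have hxy : x ≠ y := fun h => hxout (h ▸ hvy)
    have hmx : m ∈ ε x y := by
      by_contra h
      have hmem : x ∈ Nbr ε m y := mem_nbr.mpr (Or.inr h)
      rw [← hcl] at hmem
      exact hxout hmem
    obtain ⟨l, hlca, u, ⟨hlu, hul, huy⟩, hmu⟩ := (hexp x y hxy m).mp hmx
    have hur : u ≠ T.root := fun h => hul (h.trans (T.anc_root_eq (h ▸ hlu)).symm)
    have huv : T.anc u v := by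
      rcases T.anc_total huy hvy with h | h
      · exact h
      · by_cases he : u = v
        · exact he ▸ T.anc_refl v
        · exact absurd hmu (T.no_medge_below hexp hv hcl h he huy)
    obtain ⟨n, hn⟩ := huy
    exact ⟨n, by rw [hn]; exact huv, by rw [hn]; exact hur, by rw [hn]; exact hmu⟩
  obtain ⟨h1, h2, h3⟩ := Nat.find_spec hS
  by_cases hveq : T.par^[Nat.find hS] (T.leaf y) = v
  · exact hveq ▸ h3
  · exfalso
    obtain ⟨w, hw1, hw2, hw3, hw4⟩ := T.descent_step hexp hcl h1 hveq h2
    have hwv : T.anc w v := by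
      rcases T.anc_total hw3 hvy with h | h
      · exact h
      · by_cases he : w = v
        · exact he ▸ T.anc_refl v
        · exact absurd hw4 (T.no_medge_below hexp hv hcl h he hw3)
    have hwr : w ≠ T.root := fun h => h2 (T.anc_root_eq (h ▸ hw1))
    obtain ⟨j, hj⟩ := hw3
    have hjlt : j < Nat.find hS := by
      by_contra hge
      push_neg at hge
      have hanc : T.anc w (T.par^[Nat.find hS] (T.leaf y)) :=
        ⟨j - Nat.find hS, by
          rw [← Function.iterate_add_apply, Nat.sub_add_cancel hge]; exact hj⟩
      exact hw2 (T.anc_antisymm hanc hw1)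
    exact Nat.find_min hS hjlt
      ⟨by rw [hj]; exact hwv, by rw [hj]; exact hwr, by rw [hj]; exact hw4⟩

end PhyloTree

/-- the ε-tree is a coarse-graining of every edge-labeled tree
explaining `ε`. -/
theorem epsTree_coarseGraining {V W X M : Type} [Fintype X] [Fintype M] [Nonempty X] [Nonempty M]
    (ε : X → X → Set M)
    (T : PhyloTree V X) (lab : V → Set M) (hexp : Explains T lab ε)
    (That : PhyloTree W X) (labhat : W → Set M) (hhat : IsEpsTree That labhat ε) :
    CoarseGraining That labhat T lab := by
  obtain ⟨hcs, hlab⟩ := hhat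
  constructor
  · rw [hcs]
    rintro S ((hS | hS) | hS)
    · obtain ⟨m, y, rfl⟩ := hS
      obtain ⟨v, hv⟩ := T.nbr_is_cluster hexp m y
      exact ⟨v, hv.symm⟩
    · rw [Set.mem_singleton_iff] at hS
      subst hS
      exact ⟨T.root, T.cluster_root.symm⟩
    · obtain ⟨x, rfl⟩ := hS
      exact ⟨T.leaf x, (T.cluster_leaf x).symm⟩
  · intro v' hv' v hvr hcl m hm
    rw [hlab v' hv'] at hm
    obtain ⟨y, hy⟩ := hm
    exact T.mem_lab_of_cluster_eq_nbr hexp hvr (by rw [← hcl]; exact hy)
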